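/- Suppose the margin condition P{0 < |m(X) − 1/2| ≤ t} ≤ c·t^α holds for all t > 0 with constants c, α > 0, where m(x) = P(Y=1|X=x). Then for the plug-in classifier ĝ based on an estimator m̂, P{ĝ(X) ≠ Y} − P{g_B(X) ≠ Y} ≤ C·(E|m̂(X) − m(X)|²)^{(1+α)/(2+α)} for a constant C depending only on c and α. -/

import Mathlib

/-!
The excess risk of the plug-in rule is `E[(1{m̂(X) > 1/2} - 1{m(X) > 1/2}) (1 - 2 m(X))]`. The
integrand vanishes unless the two rules disagree, and then `|m(X) - 1/2| ≤ |m̂(X) - m(X)|`.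
Splitting according to whether `|m(X) - 1/2| ≤ t` bounds the excess risk, for every `t > 0`, by
`2 t P{0 < |m(X) - 1/2| ≤ t} + 2 E|m̂(X) - m(X)|² / t ≤ 2 c t^(1+a) + 2 E|m̂(X) - m(X)|² / t`,
and `t = (E|m̂(X) - m(X)|²)^(1/(2+a))` balances the two terms.
-/

open MeasureTheory Real Filter Topology

theorem le_mul_indicator_add_sq_div {d e t : ℝ} (ht : 0 < t) (hd : 0 ≤ d) (hde : d ≤ e) :
    d ≤ t * (if 0 < d ∧ d ≤ t then 1 else 0) + e ^ 2 / t := by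
  have he : 0 ≤ e ^ 2 / t := by positivity
  split_ifs with hmargin
  · linarith [hmargin.2]
  · rcases hd.eq_or_lt with rfl | hd
    · linarith
    · have hdt : t < d := lt_of_not_ge fun h => hmargin ⟨hd, h⟩
      rw [mul_zero, zero_add, le_div_iff₀ ht]
      nlinarith

theorem plugin_sub_le_margin_add_sq {u v t : ℝ} (ht : 0 < t) :
    (if 1 / 2 < u then 1 - 2 * v else 0) - (if 1 / 2 < v then 1 - 2 * v else 0)
      ≤ 2 * (t * (if 0 < |v - 1 / 2| ∧ |v - 1 / 2| ≤ t then 1 else 0) + (u - v) ^ 2 / t) := by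
  have hbound := le_mul_indicator_add_sq_div (d := |v - 1 / 2|) (e := |u - v|) ht (abs_nonneg _)
  rw [sq_abs] at hbound
  have hnonneg : 0 ≤ t * (if 0 < |v - 1 / 2| ∧ |v - 1 / 2| ≤ t then 1 else 0) + (u - v) ^ 2 / t := by
    positivity
  by_cases hu : 1 / 2 < u <;> by_cases hv : 1 / 2 < v <;> simp only [hu, hv, if_true, if_false]
  · linarith
  · have hdv : |v - 1 / 2| = 1 / 2 - v := by rw [abs_of_nonpos (by linarith)]; ring
    have := hbound (by rw [hdv]; exact le_trans (by linarith) (le_abs_self _))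
    linarith
  · have hdv : |v - 1 / 2| = v - 1 / 2 := abs_of_pos (by linarith)
    have := hbound (by rw [hdv]; exact le_trans (by linarith) (neg_le_abs _))
    linarith
  · linarith

theorem le_mul_rpow_of_forall_le_mul_rpow_add_div {x c D a : ℝ} (hD : 0 ≤ D) (ha : 0 < 1 + a)
    (h : ∀ t > 0, x ≤ c * t ^ (1 + a) + D / t) :
    x ≤ (c + 1) * D ^ ((1 + a) / (2 + a)) := by
  have h2a : 0 < 2 + a := by linarith
  rcases hD.eq_or_lt with rfl | hD
  · have hlim : Tendsto (fun t : ℝ => c * t ^ (1 + a)) (𝓝[>] 0) (𝓝 0) := by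
      have := tendsto_nhdsWithin_of_tendsto_nhds (s := Set.Ioi 0)
        ((continuousAt_rpow_const 0 (1 + a) (Or.inr ha.le)).tendsto.const_mul c)
      rwa [zero_rpow ha.ne', mul_zero] at this
    rw [zero_rpow (by positivity), mul_zero]
    exact ge_of_tendsto hlim (eventually_nhdsWithin_of_forall fun t ht => by simpa using h t ht)
  · have ht : 0 < D ^ (1 / (2 + a)) := rpow_pos_of_pos hD _
    convert h _ ht using 1
    have hexp : (1 + a) / (2 + a) = 1 - 1 / (2 + a) := by field_simp; ring
    have hpow : (D ^ (1 / (2 + a))) ^ (1 + a) = D ^ ((1 + a) / (2 + a)) := by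
      rw [← rpow_mul hD.le]
      ring_nf
    have hdiv : D / D ^ (1 / (2 + a)) = D ^ ((1 + a) / (2 + a)) := by
      rw [hexp, rpow_sub hD, rpow_one]
    rw [hpow, hdiv]
    ring

section ClassificationRisk

variable {Ω : Type*} {m₀ : MeasurableSpace Ω} [mΩ : MeasurableSpace Ω] {P : Measure Ω}
  [IsFiniteMeasure P] {Y η : Ω → ℝ} {A B : Set Ω}

theorem measureReal_indicator_ne_eq (hm₀ : m₀ ≤ mΩ) (hY : Measurable Y)
    (hY01 : ∀ ω, Y ω = 0 ∨ Y ω = 1) (hη : η =ᵐ[P] P[Y|m₀]) (hA : MeasurableSet[m₀] A) :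
    P.real {ω | A.indicator 1 ω ≠ Y ω} = ∫ ω, Y ω ∂P + ∫ ω in A, (1 - 2 * η ω) ∂P := by
  have hA' := hm₀ A hA
  have hYint : Integrable Y P := .of_bound hY.aestronglyMeasurable 1 <| .of_forall fun ω => by
    rcases hY01 ω with h | h <;> simp [h]
  have hηint : Integrable η P := integrable_condExp.congr hη.symm
  have herr : MeasurableSet {ω | A.indicator 1 ω ≠ Y ω} :=
    (measurableSet_eq_fun (measurable_one.indicator hA') hY).compl
  have hpoint : ∀ ω, {ω | A.indicator 1 ω ≠ Y ω}.indicator (1 : Ω → ℝ) ω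
      = Y ω + A.indicator (fun ω => 1 - 2 * Y ω) ω := by
    intro ω
    by_cases hω : ω ∈ A <;> rcases hY01 ω with h | h <;> norm_num [hω, h]
  have hYA : ∫ ω in A, Y ω ∂P = ∫ ω in A, η ω ∂P := by
    rw [← setIntegral_condExp hm₀ hYint hA]
    exact setIntegral_congr_ae hA' (hη.mono fun ω h _ => h.symm)
  have h1Y : Integrable (fun ω => 1 - 2 * Y ω) P := (integrable_const 1).sub (hYint.const_mul 2)
  rw [← integral_indicator_one herr, integral_congr_ae (.of_forall hpoint),
    integral_add hYint (h1Y.indicator hA'),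
    integral_indicator hA', integral_sub (integrable_const 1).integrableOn
      (hYint.const_mul 2).integrableOn, integral_sub (integrable_const 1).integrableOn
      (hηint.const_mul 2).integrableOn, integral_const_mul, integral_const_mul, hYA]

theorem measureReal_indicator_ne_sub_eq (hm₀ : m₀ ≤ mΩ) (hY : Measurable Y)
    (hY01 : ∀ ω, Y ω = 0 ∨ Y ω = 1) (hη : η =ᵐ[P] P[Y|m₀]) (hA : MeasurableSet[m₀] A)
    (hB : MeasurableSet[m₀] B) :
    P.real {ω | A.indicator 1 ω ≠ Y ω} - P.real {ω | B.indicator 1 ω ≠ Y ω}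
      = ∫ ω, (A.indicator (fun ω => 1 - 2 * η ω) ω - B.indicator (fun ω => 1 - 2 * η ω) ω) ∂P := by
  have h1η : Integrable (fun ω => 1 - 2 * η ω) P :=
    (integrable_const 1).sub ((integrable_condExp.congr hη.symm).const_mul 2)
  rw [measureReal_indicator_ne_eq hm₀ hY hY01 hη hA, measureReal_indicator_ne_eq hm₀ hY hY01 hη hB,
    integral_sub (h1η.indicator (hm₀ A hA)) (h1η.indicator (hm₀ B hB)),
    integral_indicator (hm₀ A hA), integral_indicator (hm₀ B hB)]
  ring

end ClassificationRisk

section PlugIn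

variable {Ω α : Type*} [MeasurableSpace Ω] [MeasurableSpace α] {P : Measure Ω} [IsFiniteMeasure P]
  {X : Ω → α} {Y : Ω → ℝ} {m mhat : α → ℝ}

theorem plugin_excess_risk_le {t : ℝ} (ht : 0 < t) (hX : Measurable X) (hY : Measurable Y)
    (hm : Measurable m) (hmhat : Measurable mhat) (hY01 : ∀ ω, Y ω = 0 ∨ Y ω = 1)
    (hce : (fun ω => m (X ω)) =ᵐ[P] P[Y | MeasurableSpace.comap X inferInstance])
    (hint : Integrable (fun ω => (mhat (X ω) - m (X ω)) ^ 2) P) :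
    P.real {ω | (if 1 / 2 < mhat (X ω) then (1 : ℝ) else 0) ≠ Y ω}
        - P.real {ω | (if 1 / 2 < m (X ω) then (1 : ℝ) else 0) ≠ Y ω}
      ≤ 2 * (t * P.real {ω | 0 < |m (X ω) - 1 / 2| ∧ |m (X ω) - 1 / 2| ≤ t}
        + (∫ ω, (mhat (X ω) - m (X ω)) ^ 2 ∂P) / t) := by
  have hthreshold : ∀ q : α → ℝ, Measurable q →
      MeasurableSet[MeasurableSpace.comap X inferInstance] {ω | 1 / 2 < q (X ω)} :=
    fun q hq => ⟨_, measurableSet_lt measurable_const hq, rfl⟩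
  have hclassifier : ∀ q : α → ℝ, {ω | (if 1 / 2 < q (X ω) then (1 : ℝ) else 0) ≠ Y ω}
      = {ω | {ω | 1 / 2 < q (X ω)}.indicator 1 ω ≠ Y ω} := fun q => by
    ext ω
    simp [Set.indicator_apply]
  set S := {ω | 0 < |m (X ω) - 1 / 2| ∧ |m (X ω) - 1 / 2| ≤ t}
  have hdist : Measurable fun ω => |m (X ω) - 1 / 2| := ((hm.comp hX).sub measurable_const).abs
  have hS : MeasurableSet S :=
    (measurableSet_lt measurable_const hdist).inter (measurableSet_le hdist measurable_const)
  have h1m : Integrable (fun ω => 1 - 2 * m (X ω)) P :=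
    (integrable_const 1).sub ((integrable_condExp.congr hce.symm).const_mul 2)
  have hA := hX.comap_le _ (hthreshold _ hmhat)
  have hB := hX.comap_le _ (hthreshold _ hm)
  have h1S : Integrable (S.indicator (1 : Ω → ℝ)) P := (integrable_const 1).indicator hS
  have hbound : Integrable (fun ω => 2 * (t * S.indicator 1 ω + (mhat (X ω) - m (X ω)) ^ 2 / t)) P :=
    ((h1S.const_mul t).add (hint.div_const t)).const_mul 2
  rw [hclassifier, hclassifier, measureReal_indicator_ne_sub_eq hX.comap_le hY hY01 hce
    (hthreshold _ hmhat) (hthreshold _ hm)]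
  calc _ ≤ ∫ ω, 2 * (t * S.indicator 1 ω + (mhat (X ω) - m (X ω)) ^ 2 / t) ∂P :=
        integral_mono ((h1m.indicator hA).sub (h1m.indicator hB)) hbound fun ω => by
          simpa [Set.indicator_apply, S] using plugin_sub_le_margin_add_sq ht
    _ = _ := by
      rw [integral_const_mul, integral_add (h1S.const_mul t) (hint.div_const t),
        integral_const_mul, integral_indicator_one hS, integral_div]

end PlugIn

/-- Audibert–Tsybakov, Lemma 5.2: under the margin condition with exponent `α`,
the plug-in classifier satisfies
`P{ĝ(X) ≠ Y} − P{g_B(X) ≠ Y} ≤ C·(E|m̂(X) − m(X)|²)^{(1+α)/(2+α)}`. -/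
theorem margin_condition_plugin_bound
    {Ω α : Type*} [MeasurableSpace Ω] [MeasurableSpace α]
    (c a : ℝ) (hc : 0 < c) (ha : 0 < a) :
    ∃ C > 0, ∀ (P : Measure Ω), IsProbabilityMeasure P →
      ∀ (X : Ω → α) (Y : Ω → ℝ) (m mhat : α → ℝ),
      Measurable X → Measurable Y → Measurable m → Measurable mhat →
      (∀ ω, Y ω = 0 ∨ Y ω = 1) →
      ((fun ω => m (X ω)) =ᵐ[P] P[Y | MeasurableSpace.comap X inferInstance]) →
      (∀ t : ℝ, 0 < t →
        (P {ω | 0 < |m (X ω) - 1 / 2| ∧ |m (X ω) - 1 / 2| ≤ t}).toReal ≤ c * t ^ a) →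
      Integrable (fun ω => (mhat (X ω) - m (X ω)) ^ 2) P →
      (P {ω | (if 1 / 2 < mhat (X ω) then (1 : ℝ) else 0) ≠ Y ω}).toReal
        - (P {ω | (if 1 / 2 < m (X ω) then (1 : ℝ) else 0) ≠ Y ω}).toReal
        ≤ C * (∫ ω, (mhat (X ω) - m (X ω)) ^ 2 ∂P) ^ ((1 + a) / (2 + a)) := by
  refine ⟨2 * (c + 1), by positivity, fun P _ X Y m mhat hX hY hm hmhat hY01 hce hmargin hint => ?_⟩
  simp only [← measureReal_def] at hmargin ⊢
  rw [mul_assoc, ← div_le_iff₀' two_pos]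
  refine le_mul_rpow_of_forall_le_mul_rpow_add_div (integral_nonneg fun _ => sq_nonneg _)
    (by linarith) fun t ht => ?_
  calc _ ≤ t * P.real {ω | 0 < |m (X ω) - 1 / 2| ∧ |m (X ω) - 1 / 2| ≤ t}
        + (∫ ω, (mhat (X ω) - m (X ω)) ^ 2 ∂P) / t := by
        linarith [plugin_excess_risk_le ht hX hY hm hmhat hY01 hce hint]
    _ ≤ t * (c * t ^ a) + (∫ ω, (mhat (X ω) - m (X ω)) ^ 2 ∂P) / t := by
        gcongr
        exact hmargin t ht
    _ = c * t ^ (1 + a) + (∫ ω, (mhat (X ω) - m (X ω)) ^ 2 ∂P) / t := by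
        rw [rpow_add ht, rpow_one]
        ring
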